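/- arXiv:1902.09570 — 3 statements merged into one kernel-verified Lean document; each statement's English description precedes it below -/
import Mathlib

section
/- Let U be an invariant set under the group of finitary permutations of A, and let X ⊆ U be a uniformly supported subset, i.e., some finite set T ⊆ A supports every element of X. Then X is finitely supported as an element of the powerset of U with the elementwise action, supp(X) = ⋃_{x ∈ X} supp(x), and consequently supp(X) itself supports every element of X. -/
open Pointwise

/-- The group of finitary permutations of the set `A` of atoms: bijections of `A`
whose set of non-fixed points is finite. -/
def FinPerm (A : Type*) : Subgroup (Equiv.Perm A) where
  carrier := {π : Equiv.Perm A | {a : A | π a ≠ a}.Finite}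
  one_mem' := by simp
  mul_mem' := by
    intro π σ hπ hσ
    refine Set.Finite.subset (Set.Finite.union hπ hσ) ?_
    intro a ha
    simp only [Set.mem_setOf_eq, Set.mem_union] at *
    by_contra h
    push_neg at h
    obtain ⟨h1, h2⟩ := h
    exact ha (by rw [Equiv.Perm.mul_apply, h2, h1])
  inv_mem' := by
    intro π hπ
    refine Set.Finite.subset hπ ?_
    intro a ha
    simp only [Set.mem_setOf_eq] at *
    intro h
    exact ha (π.injective (by rw [← Equiv.Perm.mul_apply, mul_inv_cancel, Equiv.Perm.one_apply, h]))

/-- An element `x` is finitely supported if some finite set of atoms supports it. -/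
def FinSupp (A : Type*) {X : Type*} [SMul (FinPerm A) X] (x : X) : Prop :=
  ∃ S : Finset A, MulAction.Supports (FinPerm A) (S : Set A) x

/-- The least support of an element: the intersection of all finite sets of atoms
supporting it. -/
def supp (A : Type*) {X : Type*} [SMul (FinPerm A) X] (x : X) : Set A :=
  ⋂₀ {S : Set A | S.Finite ∧ MulAction.Supports (FinPerm A) S x}

/-- A set `S` of atoms supports a function `f` if `f (π • x) = π • f x` for every
finitary permutation `π` fixing `S` pointwise. -/
def SuppFun (A : Type*) {X Y : Type*} [SMul (FinPerm A) X] [SMul (FinPerm A) Y]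
    (S : Set A) (f : X → Y) : Prop :=
  ∀ π : FinPerm A, (∀ a ∈ S, π • a = a) → ∀ x, f (π • x) = π • f x

/-- A set `S` of atoms supports a function `f` between the subsets `X` and `Y` if, for
every finitary permutation `π` fixing `S` pointwise and every `x ∈ X`, we have
`π • x ∈ X`, `π • f x ∈ Y` and `f (π • x) = π • f x`. -/
def SuppFunOn (A : Type*) {U V : Type*} [SMul (FinPerm A) U] [SMul (FinPerm A) V]
    (S : Set A) (X : Set U) (Y : Set V) (f : U → V) : Prop :=
  ∀ π : FinPerm A, (∀ a ∈ S, π • a = a) →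
    ∀ x ∈ X, π • x ∈ X ∧ π • f x ∈ Y ∧ f (π • x) = π • f x

/-- `℘_fs(X)`: the finitely supported subsets of the set `X`. -/
def Pfs (A : Type*) {U : Type*} [SMul (FinPerm A) U] (X : Set U) : Set (Set U) :=
  {Z : Set U | Z ⊆ X ∧ FinSupp A Z}

/-!
For a uniformly supported `X`, the common finite support `T` supports `X` itself, and so does
`W = ⋃ x ∈ X, supp x`, giving `supp X ⊆ W`. Conversely, if `a ∈ supp x` for some `x ∈ X` but `a`
lies outside a finite support `S` of `X`, swap `a` with an atom `b` fresh for `S` and `T`: the swap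
fixes `X`, so it maps `x` to an element of `X` whose least support contains `b ∉ T`, which is
impossible.
-/

namespace MulAction

variable {G α β : Type*}

theorem Supports.smul_of_group [Group G] [MulAction G α] [MulAction G β] {s : Set α} {b : β}
    (h : Supports G s b) (g : G) : Supports G (g • s) (g • b) := by
  intro g' hg'
  have hconj : (g⁻¹ * g' * g) • b = b := h _ fun a ha => by
    rw [mul_smul, mul_smul, hg' (Set.smul_mem_smul_set ha), inv_smul_smul]
  calc g' • g • b = g • (g⁻¹ * g' * g) • b := by simp only [mul_smul, smul_inv_smul]
    _ = g • b := by rw [hconj]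

theorem supports_set_of_forall_mem [SMul G α] [SMul G β] {s : Set α} {X : Set β}
    (h : ∀ x ∈ X, Supports G s x) : Supports G s X :=
  fun g hg => Set.EqOn.image_eq_self fun x hx => h x hx g hg

end MulAction

open MulAction

namespace FinPerm

variable {A : Type*}

theorem smul_eq_self_of_notMem {π : FinPerm A} {a : A} (h : a ∉ {b | π.val b ≠ b}) :
    π • a = a :=
  not_not.mp h

variable [DecidableEq A]

def swap (a b : A) : FinPerm A :=
  ⟨Equiv.swap a b, ((Set.finite_singleton b).insert a).subset fun _ hc =>
    Equiv.eq_or_eq_of_swap_apply_ne_self hc⟩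

@[simp]
theorem swap_smul (a b c : A) : FinPerm.swap a b • c = Equiv.swap a b c := rfl

@[simp]
theorem swap_mul_self (a b : A) : FinPerm.swap a b * FinPerm.swap a b = 1 :=
  Subtype.ext (Equiv.swap_mul_self a b)

end FinPerm

section Supp

variable {A U : Type*} [MulAction (FinPerm A) U]

theorem supp_subset_of_supports {x : U} {S : Set A} (hSf : S.Finite)
    (hS : Supports (FinPerm A) S x) : supp A x ⊆ S :=
  Set.sInter_subset_of_mem ⟨hSf, hS⟩

theorem smul_mem_supp_smul (π : FinPerm A) {x : U} {a : A} (ha : a ∈ supp A x) :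
    π • a ∈ supp A (π • x) := by
  rintro S ⟨hSf, hS⟩
  have hS' : Supports (FinPerm A) (π⁻¹ • S) x := by
    simpa only [inv_smul_smul] using hS.smul_of_group π⁻¹
  obtain ⟨b, hb, rfl⟩ := supp_subset_of_supports (hSf.smul_set (a := π⁻¹)) hS' ha
  rwa [smul_inv_smul]

variable [Infinite A]

/-- Conjugating by the swap of `a` with an atom fresh for `S₁`, `S₂` and `π` turns a `π` fixing
`S₂ \ {a}` into one fixing `S₂`; this is where the infinitude of `A` enters. -/
theorem MulAction.Supports.diff_singleton {x : U} {S₁ S₂ : Set A} (h₁f : S₁.Finite)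
    (h₂f : S₂.Finite)
    (h₁ : Supports (FinPerm A) S₁ x) (h₂ : Supports (FinPerm A) S₂ x) {a : A} (ha : a ∉ S₁) :
    Supports (FinPerm A) (S₂ \ {a}) x := by
  classical
  intro π hπ
  obtain ⟨b, hb⟩ := ((h₁f.union h₂f).union π.2).exists_notMem
  simp only [Set.mem_union, not_or] at hb
  obtain ⟨⟨hb₁, hb₂⟩, hbπ⟩ := hb
  set τ := FinPerm.swap a b
  have hττ : τ * τ = 1 := FinPerm.swap_mul_self a b
  have hτx : τ • x = x := h₁ τ fun c hc => by
    simpa [τ] using Equiv.swap_apply_of_ne_of_ne (ne_of_mem_of_not_mem hc ha)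
      (ne_of_mem_of_not_mem hc hb₁)
  have hconj : (τ * π * τ) • x = x := h₂ _ fun c hc => by
    by_cases hca : c = a
    · subst hca
      simp [mul_smul, τ, FinPerm.smul_eq_self_of_notMem hbπ]
    · have hcb : c ≠ b := ne_of_mem_of_not_mem hc hb₂
      simp [mul_smul, τ, Equiv.swap_apply_of_ne_of_ne hca hcb, hπ ⟨hc, hca⟩]
  calc π • x = (τ * (τ * π * τ) * τ) • x := by
        rw [← mul_assoc, ← mul_assoc, hττ, one_mul, mul_assoc, hττ, mul_one]
    _ = x := by rw [mul_smul, mul_smul, hτx, hconj, hτx]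

theorem supports_supp {x : U} (hx : FinSupp A x) : Supports (FinPerm A) (supp A x) x := by
  classical
  obtain ⟨S, hS, hmin⟩ := (measure Finset.card).wf.has_min
    {S : Finset A | Supports (FinPerm A) (S : Set A) x} hx
  suffices hSsupp : (S : Set A) ⊆ supp A x from hS.mono hSsupp
  intro a haS S' ⟨hS'f, hS'⟩
  by_contra haS'
  refine hmin (S.erase a) ?_ (Finset.card_erase_lt_of_mem haS)
  show Supports (FinPerm A) ((S.erase a : Finset A) : Set A) x
  rw [Finset.coe_erase]
  exact hS'.diff_singleton hS'f S.finite_toSet hS haS'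

theorem supp_subset_of_supports_of_mem {X : Set U} {T S : Set A} (hTf : T.Finite)
    (hT : ∀ x ∈ X, Supports (FinPerm A) T x) (hSf : S.Finite) (hS : Supports (FinPerm A) S X)
    {x : U} (hx : x ∈ X) : supp A x ⊆ S := by
  classical
  intro a hax
  by_contra haS
  obtain ⟨b, hb⟩ := (hTf.union hSf).exists_notMem
  obtain ⟨hbT, hbS⟩ := not_or.mp hb
  set τ := FinPerm.swap a b
  have hτX : τ • X = X := hS τ fun c hc => by
    simpa [τ] using Equiv.swap_apply_of_ne_of_ne (ne_of_mem_of_not_mem hc haS)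
      (ne_of_mem_of_not_mem hc hbS)
  have hτx : τ • x ∈ X := hτX ▸ Set.smul_mem_smul_set hx
  have hb : b ∈ supp A (τ • x) := by simpa [τ] using smul_mem_supp_smul τ hax
  exact hbT (supp_subset_of_supports hTf (hT _ hτx) hb)

end Supp

/-- a uniformly supported subset `X` of an invariant set `U` (all of whose
elements are supported by one common finite set `T` of atoms) is finitely supported with
respect to the elementwise action, its least support is the union of the least supports
of its elements, and consequently `supp X` itself supports every element of `X`. -/
theorem uniformly_supported_subset_finSupp_and_supp_eq_iUnion {A U : Type*} [Infinite A]
    [MulAction (FinPerm A) U] (hU : ∀ u : U, FinSupp A u)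
    (X : Set U) (T : Finset A)
    (hT : ∀ x ∈ X, MulAction.Supports (FinPerm A) (T : Set A) x) :
    FinSupp A X ∧ (supp A X = ⋃ x ∈ X, supp A x) ∧
      (∀ x ∈ X, MulAction.Supports (FinPerm A) (supp A X) x) := by
  have hsupp_le : ∀ x ∈ X, supp A x ⊆ ⋃ y ∈ X, supp A y := fun x hx =>
    Set.subset_biUnion_of_mem (u := fun y => supp A y) hx
  have hW : (⋃ x ∈ X, supp A x).Finite :=
    T.finite_toSet.subset <| Set.iUnion₂_subset fun x hx =>
      supp_subset_of_supports T.finite_toSet (hT x hx)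
  have hWX : Supports (FinPerm A) (⋃ x ∈ X, supp A x) X :=
    supports_set_of_forall_mem fun x hx => (supports_supp (hU x)).mono (hsupp_le x hx)
  have hsupp_eq : supp A X = ⋃ x ∈ X, supp A x :=
    (supp_subset_of_supports hW hWX).antisymm <| Set.iUnion₂_subset fun x hx =>
      Set.subset_sInter fun S ⟨hSf, hS⟩ =>
        supp_subset_of_supports_of_mem T.finite_toSet hT hSf hS hx
  refine ⟨⟨T, supports_set_of_forall_mem hT⟩, hsupp_eq, fun x hx => ?_⟩
  exact (supports_supp (hU x)).mono (hsupp_eq ▸ hsupp_le x hx)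
end

section
/- (Finitely supported Cantor–Schröder–Bernstein) Let B and C be invariant sets under the group of finitary permutations of A. If f : B → C is an injection supported by a finite set S ⊆ A and g : C → B is an injection supported by a finite set T ⊆ A, then there exists a bijection h : B → C supported by S ∪ T. -/
open Pointwise

/-!
The classical Schröder–Bernstein bijection is built from `f` and `g` alone: it is `f` on the set
`core f g` of points whose backward `g ∘ f`-orbit starts outside `range g`, and `g⁻¹` elsewhere.
Hence any pair of permutations intertwining `f` and `g` preserves `core f g` and intertwines the
bijection too. A finitary permutation fixing `S ∪ T` pointwise intertwines `f` and `g`.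
-/

open Function Set

namespace SchroederBernstein

variable {α β : Type*} (f : α → β) (g : β → α)

def core : Set α := ⋃ n, (g ∘ f)^[n] '' (range g)ᶜ

variable {f g}

theorem mem_core_iff {a : α} :
    a ∈ core f g ↔ ∃ n, ∃ x ∉ range g, (g ∘ f)^[n] x = a := by
  simp only [core, mem_iUnion, mem_image, mem_compl_iff]

theorem mem_range_of_notMem_core {a : α} (ha : a ∉ core f g) : a ∈ range g := by
  by_contra hg
  exact ha (mem_core_iff.2 ⟨0, a, hg, rfl⟩)

theorem comp_mem_core {a : α} (ha : a ∈ core f g) : g (f a) ∈ core f g := by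
  obtain ⟨n, x, hx, rfl⟩ := mem_core_iff.1 ha
  exact mem_core_iff.2 ⟨n + 1, x, hx, iterate_succ_apply' _ n x⟩

theorem exists_mem_core_of_apply_mem_core (hg : Injective g) {b : β} (hb : g b ∈ core f g) :
    ∃ a ∈ core f g, f a = b := by
  obtain ⟨n, x, hx, hxb⟩ := mem_core_iff.1 hb
  cases n with
  | zero => exact absurd ⟨b, hxb.symm⟩ hx
  | succ n =>
    rw [iterate_succ_apply'] at hxb
    exact ⟨_, mem_core_iff.2 ⟨n, x, hx, rfl⟩, hg hxb⟩

open Classical in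
variable (f g) in
noncomputable def bij (a : α) : β :=
  if ha : a ∈ core f g then f a else (mem_range_of_notMem_core ha).choose

theorem bij_of_mem_core {a : α} (ha : a ∈ core f g) : bij f g a = f a := dif_pos ha

theorem apply_bij_of_notMem_core {a : α} (ha : a ∉ core f g) : g (bij f g a) = a := by
  rw [bij, dif_neg ha]
  exact (mem_range_of_notMem_core ha).choose_spec

theorem bij_bijective (hf : Injective f) (hg : Injective g) : Bijective (bij f g) := by
  constructor
  · intro a₁ a₂ h
    by_cases h₁ : a₁ ∈ core f g <;> by_cases h₂ : a₂ ∈ core f g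
    · rw [bij_of_mem_core h₁, bij_of_mem_core h₂] at h
      exact hf h
    · refine absurd ?_ h₂
      rw [← apply_bij_of_notMem_core h₂, ← h, bij_of_mem_core h₁]
      exact comp_mem_core h₁
    · refine absurd ?_ h₁
      rw [← apply_bij_of_notMem_core h₁, h, bij_of_mem_core h₂]
      exact comp_mem_core h₂
    · rw [← apply_bij_of_notMem_core h₁, h, apply_bij_of_notMem_core h₂]
  · intro b
    by_cases hb : g b ∈ core f g
    · obtain ⟨a, ha, rfl⟩ := exists_mem_core_of_apply_mem_core hg hb
      exact ⟨a, bij_of_mem_core ha⟩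
    · exact ⟨g b, hg (apply_bij_of_notMem_core hb)⟩

section Equivariance

variable {σ : Equiv.Perm α} {τ : Equiv.Perm β}

theorem mapsTo_core (hf : Semiconj f σ τ) (hg : Semiconj g τ σ) :
    MapsTo σ (core f g) (core f g) := by
  intro a ha
  obtain ⟨n, x, hx, rfl⟩ := mem_core_iff.1 ha
  have hg' : Semiconj g τ.symm σ.symm :=
    hg.inverses_right τ.rightInverse_symm σ.leftInverse_symm
  refine mem_core_iff.2 ⟨n, σ x, ?_, Commute.iterate_left (hg.comp_left hf) n x⟩
  rintro ⟨b, hb⟩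
  exact hx ⟨τ.symm b, by rw [hg', hb, Equiv.symm_apply_apply]⟩

theorem apply_mem_core_iff (hf : Semiconj f σ τ) (hg : Semiconj g τ σ) {a : α} :
    σ a ∈ core f g ↔ a ∈ core f g := by
  refine ⟨fun ha => ?_, fun ha => mapsTo_core hf hg ha⟩
  have hf' := hf.inverses_right σ.rightInverse_symm τ.leftInverse_symm
  have hg' := hg.inverses_right τ.rightInverse_symm σ.leftInverse_symm
  simpa using mapsTo_core (σ := σ.symm) (τ := τ.symm) hf' hg' ha

theorem semiconj_bij (hg_inj : Injective g) (hf : Semiconj f σ τ) (hg : Semiconj g τ σ) :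
    Semiconj (bij f g) σ τ := by
  intro a
  by_cases ha : a ∈ core f g
  · rw [bij_of_mem_core ha, bij_of_mem_core ((apply_mem_core_iff hf hg).2 ha), hf]
  · have hσa : σ a ∉ core f g := (apply_mem_core_iff hf hg).not.2 ha
    apply hg_inj
    rw [apply_bij_of_notMem_core hσa, hg, apply_bij_of_notMem_core ha]

end Equivariance

end SchroederBernstein

theorem fsm_cantor_schroeder_bernstein_general {A B C : Type*}
    [MulAction (FinPerm A) B] [MulAction (FinPerm A) C]
    (f : B → C) (S : Finset A) (hf : Function.Injective f) (hfS : SuppFun A (S : Set A) f)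
    (g : C → B) (T : Finset A) (hg : Function.Injective g) (hgT : SuppFun A (T : Set A) g) :
    ∃ h : B → C, Function.Bijective h ∧ SuppFun A ((S : Set A) ∪ (T : Set A)) h := by
  refine ⟨SchroederBernstein.bij f g, SchroederBernstein.bij_bijective hf hg, fun π hπ => ?_⟩
  have hfπ : Semiconj f (MulAction.toPerm π) (MulAction.toPerm π) :=
    hfS π fun a ha => hπ a (Or.inl ha)
  have hgπ : Semiconj g (MulAction.toPerm π) (MulAction.toPerm π) :=
    hgT π fun a ha => hπ a (Or.inr ha)
  exact SchroederBernstein.semiconj_bij hg hfπ hgπ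

/-- finitely supported Cantor–Schröder–Bernstein: if `B` and `C` are
invariant sets, `f : B → C` is an injection supported by the finite set `S` of atoms and
`g : C → B` is an injection supported by the finite set `T` of atoms, then there is a
bijection `h : B → C` supported by `S ∪ T`. -/
theorem fsm_cantor_schroeder_bernstein {A B C : Type*} [Infinite A]
    [MulAction (FinPerm A) B] [MulAction (FinPerm A) C]
    (hB : ∀ b : B, FinSupp A b) (hC : ∀ c : C, FinSupp A c)
    (f : B → C) (S : Finset A) (hf : Function.Injective f) (hfS : SuppFun A (S : Set A) f)
    (g : C → B) (T : Finset A) (hg : Function.Injective g) (hgT : SuppFun A (T : Set A) g) :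
    ∃ h : B → C, Function.Bijective h ∧ SuppFun A ((S : Set A) ∪ (T : Set A)) h :=
  fsm_cantor_schroeder_bernstein_general f S hf hfS g T hg hgT
end

section
/- Let X be any set equipped with the trivial action of the group of finitary permutations of A (π • x = x for all x). Then: (i) every function f : A → X supported by a finite set S ⊆ A is constant on A ∖ S, and hence has finite image; (ii) every finitely supported function g : X → A has finite image. Consequently, if X is infinite there is neither a finitely supported injection from A into X nor a finitely supported surjection from X onto A (and vice versa). -/
open Pointwise

/-! A transposition of two atoms outside `S` is a finitary permutation fixing `S` pointwise, so
these permutations act transitively on the complement of `S`. Hence a map `A → X` into an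
invariant set that is supported by `S` is constant off `S`, while an atom fixed by everything
fixing a finite `S` lies in `S` (otherwise swap it with a fresh atom). Both images are therefore
finite, which rules out injections and surjections between `A` and an infinite invariant set. -/

namespace FinPerm

variable {A : Type*}

theorem swap_mem [DecidableEq A] (a b : A) : Equiv.swap a b ∈ FinPerm A :=
  (Set.toFinite {a, b}).subset fun _ hc => (Equiv.swap_apply_ne_self_iff.mp hc).2

theorem exists_smul_eq_of_notMem {S : Set A} {a b : A} (ha : a ∉ S) (hb : b ∉ S) :
    ∃ π : FinPerm A, (∀ c ∈ S, π • c = c) ∧ π • a = b := by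
  classical
  refine ⟨⟨Equiv.swap a b, swap_mem a b⟩, fun c hc => ?_, Equiv.swap_apply_left a b⟩
  exact Equiv.swap_apply_of_ne_of_ne (fun h => ha (h ▸ hc)) (fun h => hb (h ▸ hc))

theorem apply_eq_of_notMem_of_invariant {X : Type*} {f : A → X} {S : Set A}
    (hf : ∀ π : FinPerm A, (∀ a ∈ S, π • a = a) → ∀ a, f (π • a) = f a)
    {a b : A} (ha : a ∉ S) (hb : b ∉ S) : f a = f b := by
  obtain ⟨π, hπS, rfl⟩ := exists_smul_eq_of_notMem ha hb
  exact (hf π hπS a).symm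

theorem finite_range_of_invariant {X : Type*} {f : A → X} {S : Set A} (hS : S.Finite)
    (hf : ∀ π : FinPerm A, (∀ a ∈ S, π • a = a) → ∀ a, f (π • a) = f a) :
    (Set.range f).Finite := by
  have hconst : (f '' Sᶜ).Subsingleton := by
    rintro _ ⟨a, ha, rfl⟩ _ ⟨b, hb, rfl⟩
    exact apply_eq_of_notMem_of_invariant hf ha hb
  rw [← Set.image_univ, ← Set.union_compl_self S, Set.image_union]
  exact (hS.image f).union hconst.finite

theorem mem_of_supports [Infinite A] {S : Set A} (hS : S.Finite) {a : A}
    (h : MulAction.Supports (FinPerm A) S a) : a ∈ S := by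
  by_contra ha
  obtain ⟨b, hb⟩ := (hS.insert a).infinite_compl.nonempty
  rw [Set.mem_compl_iff, Set.mem_insert_iff, not_or] at hb
  obtain ⟨π, hπS, rfl⟩ := exists_smul_eq_of_notMem ha hb.2
  exact hb.1 (h π fun c hc => hπS c hc)

end FinPerm

/-- let `X` carry the trivial action of the finitary permutations of `A`.
(i) Every function `f : A → X` supported by a finite set `S` of atoms is constant on
    `A ∖ S` and has finite image;
(ii) every finitely supported function `g : X → A` has finite image.
Consequently, if `X` is infinite there is neither a finitely supported injection from
`A` into `X` nor a finitely supported surjection from `X` onto `A`, and vice versa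
(no finitely supported injection from `X` into `A`, no finitely supported surjection
from `A` onto `X`). -/
theorem trivial_action_functions_finite_image {A X : Type*} [Infinite A] :
    (∀ (f : A → X) (S : Finset A),
      (∀ π : FinPerm A, (∀ a ∈ (S : Set A), π • a = a) → ∀ a : A, f (π • a) = f a) →
      (∀ a ∉ S, ∀ b ∉ S, f a = f b) ∧ (Set.range f).Finite) ∧
    (∀ (g : X → A) (S : Finset A),
      (∀ π : FinPerm A, (∀ a ∈ (S : Set A), π • a = a) → ∀ x : X, π • g x = g x) →
      (Set.range g).Finite) ∧
    (Infinite X →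
      (¬ ∃ (f : A → X) (S : Finset A), Function.Injective f ∧
        (∀ π : FinPerm A, (∀ a ∈ (S : Set A), π • a = a) → ∀ a : A, f (π • a) = f a)) ∧
      (¬ ∃ (g : X → A) (S : Finset A), Function.Surjective g ∧
        (∀ π : FinPerm A, (∀ a ∈ (S : Set A), π • a = a) → ∀ x : X, π • g x = g x)) ∧
      (¬ ∃ (g : X → A) (S : Finset A), Function.Injective g ∧
        (∀ π : FinPerm A, (∀ a ∈ (S : Set A), π • a = a) → ∀ x : X, π • g x = g x)) ∧
      (¬ ∃ (f : A → X) (S : Finset A), Function.Surjective f ∧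
        (∀ π : FinPerm A, (∀ a ∈ (S : Set A), π • a = a) → ∀ a : A, f (π • a) = f a))) := by
  have hdom : ∀ (f : A → X) (S : Finset A),
      (∀ π : FinPerm A, (∀ a ∈ (S : Set A), π • a = a) → ∀ a : A, f (π • a) = f a) →
      (∀ a ∉ S, ∀ b ∉ S, f a = f b) ∧ (Set.range f).Finite := fun f S hf =>
    ⟨fun _ ha _ hb => FinPerm.apply_eq_of_notMem_of_invariant hf ha hb,
      FinPerm.finite_range_of_invariant S.finite_toSet hf⟩
  have hcod : ∀ (g : X → A) (S : Finset A),
      (∀ π : FinPerm A, (∀ a ∈ (S : Set A), π • a = a) → ∀ x : X, π • g x = g x) →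
      (Set.range g).Finite := fun g S hg =>
    S.finite_toSet.subset <| Set.range_subset_iff.2 fun x =>
      FinPerm.mem_of_supports S.finite_toSet fun π hπ => hg π (fun _ ha => hπ ha) x
  refine ⟨hdom, hcod, fun _ => ⟨?_, ?_, ?_, ?_⟩⟩
  · rintro ⟨f, S, hinj, hf⟩
    exact Set.infinite_range_of_injective hinj (hdom f S hf).2
  · rintro ⟨g, S, hsurj, hg⟩
    exact Set.infinite_univ (hsurj.range_eq ▸ hcod g S hg)
  · rintro ⟨g, S, hinj, hg⟩
    exact Set.infinite_range_of_injective hinj (hcod g S hg)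
  · rintro ⟨f, S, hsurj, hf⟩
    exact Set.infinite_univ (hsurj.range_eq ▸ (hdom f S hf).2)
end
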